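/- arXiv:2309.06700 — 3 statements merged into one kernel-verified Lean document; each statement's English description precedes it below -/
import Mathlib

section
/- Let G be a Young function satisfying Δ₂ and ∇₂. Then for every ε ∈ (0,1) there exists C > 0 such that for all s ≥ 0 and t > 0: s·(G(t)/t) ≤ ε·G(s) + C·G(t). -/
open Real Filter Set

/-- `G` is a Young function: nondecreasing and convex on `[0,∞)`, `G 0 = 0`,
`G(t) → ∞`, `G(t)/t → 0` as `t → 0⁺`, and `G(t)/t → ∞` as `t → ∞`. -/
def IsYoung (G : ℝ → ℝ) : Prop :=
  MonotoneOn G (Set.Ici 0) ∧ ConvexOn ℝ (Set.Ici 0) G ∧ G 0 = 0 ∧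
    Tendsto G atTop atTop ∧
    Tendsto (fun t => G t / t) (nhdsWithin 0 (Set.Ioi 0)) (nhds 0) ∧
    Tendsto (fun t => G t / t) atTop atTop

/-- The complementary Young function `G*(t) = sup {t·s − G(s) : s ≥ 0}`. -/
noncomputable def youngConj (G : ℝ → ℝ) (t : ℝ) : ℝ :=
  sSup ((fun s => t * s - G s) '' Set.Ici 0)

/-- The Δ₂ condition. -/
def Delta2 (G : ℝ → ℝ) : Prop :=
  ∃ τ : ℝ, 1 < τ ∧ ∀ t : ℝ, 0 ≤ t → G (2 * t) ≤ τ * G t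

/-- The ∇₂ condition. -/
def Nabla2 (G : ℝ → ℝ) : Prop :=
  ∃ τ : ℝ, 1 < τ ∧ ∀ t : ℝ, 0 ≤ t → G t ≤ (1 / (2 * τ)) * G (τ * t)

/-!
For `s ≤ τⁿ t` the bound `s · G(t)/t ≤ τⁿ G(t)` is immediate. For `s > τⁿ t`, put `u = s / τⁿ ≥ t`:
convexity and `G 0 = 0` make `G(t)/t` nondecreasing, so `s · G(t)/t ≤ s · G(u)/u = τⁿ G(u)`, and
`n` iterations of `∇₂` in the form `τ G(x) ≤ G(τ x) / 2` give `τⁿ G(u) ≤ 2⁻ⁿ G(s) ≤ ε G(s)`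
once `2⁻ⁿ < ε`.
-/

theorem IsYoung.nonneg {G : ℝ → ℝ} (hG : IsYoung G) {x : ℝ} (hx : 0 ≤ x) : 0 ≤ G x :=
  hG.2.2.1 ▸ hG.1 self_mem_Ici hx hx

theorem ConvexOn.div_le_div_of_map_zero {G : ℝ → ℝ} (hconv : ConvexOn ℝ (Ici 0) G)
    (h0 : G 0 = 0) {t u : ℝ} (ht : 0 < t) (htu : t ≤ u) : G t / t ≤ G u / u := by
  simpa [h0] using hconv.secant_mono self_mem_Ici ht.le (ht.trans_le htu).le ht.ne'
    (ht.trans_le htu).ne' htu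

theorem pow_mul_le_half_pow_mul_of_nabla2 {G : ℝ → ℝ} {τ : ℝ} (hτ0 : 0 < τ)
    (hτ : ∀ t : ℝ, 0 ≤ t → G t ≤ (1 / (2 * τ)) * G (τ * t)) (m : ℕ) {x : ℝ} (hx : 0 ≤ x) :
    τ ^ m * G x ≤ (1 / 2) ^ m * G (τ ^ m * x) := by
  induction m generalizing x with
  | zero => simp
  | succ m ih =>
    have hstep : τ * G x ≤ (1 / 2) * G (τ * x) := by
      calc τ * G x ≤ τ * ((1 / (2 * τ)) * G (τ * x)) := by gcongr; exact hτ x hx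
        _ = (1 / 2) * G (τ * x) := by field_simp
    calc τ ^ (m + 1) * G x = τ ^ m * (τ * G x) := by ring
      _ ≤ τ ^ m * ((1 / 2) * G (τ * x)) := by gcongr
      _ = (1 / 2) * (τ ^ m * G (τ * x)) := by ring
      _ ≤ (1 / 2) * ((1 / 2) ^ m * G (τ ^ m * (τ * x))) :=
          mul_le_mul_of_nonneg_left (ih (mul_nonneg hτ0.le hx)) (by norm_num)
      _ = (1 / 2) ^ (m + 1) * G (τ ^ (m + 1) * x) := by ring_nf

theorem modular_young_inequality_general (G : ℝ → ℝ) (hG : IsYoung G) (hN : Nabla2 G) :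
    ∀ ε : ℝ, ε ∈ Set.Ioo (0:ℝ) 1 → ∃ C : ℝ, 0 < C ∧
      ∀ s t : ℝ, 0 ≤ s → 0 < t → s * (G t / t) ≤ ε * G s + C * G t := by
  obtain ⟨τ, hτ1, hτ⟩ := hN
  rintro ε ⟨hε0, -⟩
  obtain ⟨n, hn⟩ := exists_pow_lt_of_lt_one hε0 (by norm_num : (1 : ℝ) / 2 < 1)
  have hτn : 0 < τ ^ n := pow_pos (by linarith) n
  refine ⟨τ ^ n, hτn, fun s t hs ht => ?_⟩
  have hGs := hG.nonneg hs
  have hGt := hG.nonneg ht.le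
  rcases le_or_gt s (τ ^ n * t) with hsmall | hlarge
  · calc s * (G t / t) ≤ τ ^ n * t * (G t / t) := by gcongr
      _ = τ ^ n * G t := by field_simp
      _ ≤ ε * G s + τ ^ n * G t := by nlinarith
  · set u := s / τ ^ n
    have htu : t ≤ u := by rw [le_div_iff₀ hτn]; linarith
    have hsu : τ ^ n * u = s := mul_div_cancel₀ s hτn.ne'
    calc s * (G t / t) ≤ s * (G u / u) :=
          mul_le_mul_of_nonneg_left (hG.2.1.div_le_div_of_map_zero hG.2.2.1 ht htu) hs
      _ = τ ^ n * G u := by rw [← hsu]; field_simp [(ht.trans_le htu).ne']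
      _ ≤ (1 / 2) ^ n * G s := hsu ▸ pow_mul_le_half_pow_mul_of_nabla2 (by linarith) hτ n
          (ht.le.trans htu)
      _ ≤ ε * G s + τ ^ n * G t := by nlinarith

theorem modular_young_inequality (G : ℝ → ℝ) (hG : IsYoung G) (hΔ : Delta2 G) (hN : Nabla2 G) :
    ∀ ε : ℝ, ε ∈ Set.Ioo (0:ℝ) 1 → ∃ C : ℝ, 0 < C ∧
      ∀ s t : ℝ, 0 ≤ s → 0 < t → s * (G t / t) ≤ ε * G s + C * G t :=
  modular_young_inequality_general G hG hN
end

section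
/- Let Ω ⊂ ℝⁿ be a bounded measurable set with positive measure, p ≥ 1, α > 0, and let f ∈ L^p log^α L(Ω) with ‖f‖_p > 0. Then ‖f‖_{L^p log^α L(Ω)} ≤ [f]_{L^p log^α L(Ω)} ≤ (2^α + (2α/(e·p))^α) · ‖f‖_{L^p log^α L(Ω)}, where the mean integral ⨍ denotes integral divided by |Ω|. -/
/-!
Write `I(c) = ⨍ |f|^p log^α(e + |f|/c)`. Then `σ > 0` is admissible for the Luxemburg norm iff
`I(σ) ≤ σ^p`, `‖f‖_p^p ≤ I(c)` for every `c > 0`, `I` is antitone, and `[f]^p = I(‖f‖_p)`.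
Hence `‖f‖_p ≤ [f]` and `I([f]) ≤ I(‖f‖_p) = [f]^p`: the modular is admissible, which is the
first inequality. Conversely an admissible `σ` satisfies `‖f‖_p ≤ σ`, and
`log(e + t/‖f‖_p) ≤ log(σ/‖f‖_p) + log(e + t/σ)` with `(a + b)^α ≤ 2^α (a^α + b^α)` gives
`[f]^p ≤ 2^α (log^α(σ/‖f‖_p) ‖f‖_p^p + σ^p)`. As `s^p log^α(1/s) ≤ (α/(e p))^α` on `(0, 1]`,
this is at most `C σ^p ≤ (C σ)^p`, using `C ≥ 1` and `p ≥ 1`.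
-/

open Real MeasureTheory

variable {n : ℕ}

/-- The mean `L^p` norm `‖f‖_p = (⨍_Ω |f|^p)^{1/p}` (with mean integral). -/
noncomputable def meanLpNorm (Ω : Set (EuclideanSpace ℝ (Fin n))) (p : ℝ)
    (f : EuclideanSpace ℝ (Fin n) → ℝ) : ℝ :=
  (⨍ x in Ω, |f x| ^ p) ^ (1 / p)

/-- The Luxemburg norm of the Orlicz–Zygmund space `L^p log^α L(Ω)` (mean-integral form). -/
noncomputable def luxNorm (Ω : Set (EuclideanSpace ℝ (Fin n))) (p α : ℝ)
    (f : EuclideanSpace ℝ (Fin n) → ℝ) : ℝ :=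
  sInf {σ : ℝ | 0 < σ ∧
    ⨍ x in Ω, (|f x| ^ p / σ ^ p) * (Real.log (Real.exp 1 + |f x| / σ)) ^ α ≤ 1}

/-- The modular `[f]_{L^p log^α L(Ω)}`. -/
noncomputable def modularNorm (Ω : Set (EuclideanSpace ℝ (Fin n))) (p α : ℝ)
    (f : EuclideanSpace ℝ (Fin n) → ℝ) : ℝ :=
  (⨍ x in Ω, |f x| ^ p *
    (Real.log (Real.exp 1 + |f x| / meanLpNorm Ω p f)) ^ α) ^ (1 / p)

namespace Real

lemma add_rpow_le_two_rpow_mul_rpow_add_rpow {a b p : ℝ} (ha : 0 ≤ a) (hb : 0 ≤ b)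
    (hp : 0 ≤ p) : (a + b) ^ p ≤ 2 ^ p * (a ^ p + b ^ p) := calc
  (a + b) ^ p ≤ (max a b + max a b) ^ p :=
    rpow_le_rpow (add_nonneg ha hb) (add_le_add (le_max_left a b) (le_max_right a b)) hp
  _ = (2 * max a b) ^ p := by rw [two_mul]
  _ = 2 ^ p * max (a ^ p) (b ^ p) := by
    rw [mul_rpow zero_le_two (le_max_of_le_left ha), rpow_max ha hb hp]
  _ ≤ 2 ^ p * (a ^ p + b ^ p) := by
    gcongr; exact max_le_add_of_nonneg (rpow_nonneg ha p) (rpow_nonneg hb p)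

lemma log_rpow_le_mul_rpow {r p α : ℝ} (hr : 1 ≤ r) (hp : 0 < p) (hα : 0 < α) :
    log r ^ α ≤ (α / (exp 1 * p)) ^ α * r ^ p := by
  have hr₀ : 0 < r := by linarith
  -- `e * log y ≤ y` at `y = r ^ (p / α)`
  have hlog : log r ≤ α / (exp 1 * p) * r ^ (p / α) := by
    have h := exp_one_mul_le_exp (x := log (r ^ (p / α)))
    rw [exp_log (rpow_pos_of_pos hr₀ _), log_rpow hr₀] at h
    rw [div_mul_eq_mul_div, le_div_iff₀ (by positivity)]
    calc log r * (exp 1 * p) = α * (exp 1 * (p / α * log r)) := by field_simp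
      _ ≤ α * r ^ (p / α) := by gcongr
  calc log r ^ α ≤ (α / (exp 1 * p) * r ^ (p / α)) ^ α :=
        rpow_le_rpow (log_nonneg hr) hlog hα.le
    _ = (α / (exp 1 * p)) ^ α * r ^ p := by
      rw [mul_rpow (by positivity) (by positivity), ← rpow_mul hr₀.le, div_mul_cancel₀ _ hα.ne']

lemma one_le_log_exp_one_add {s : ℝ} (hs : 0 ≤ s) : 1 ≤ log (exp 1 + s) :=
  (log_exp 1).symm.trans_le (log_le_log (exp_pos 1) (le_add_of_nonneg_right hs))

lemma le_mul_log_exp_one_add_rpow {a s α : ℝ} (ha : 0 ≤ a) (hs : 0 ≤ s) (hα : 0 ≤ α) :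
    a ≤ a * log (exp 1 + s) ^ α :=
  le_mul_of_one_le_right ha (one_le_rpow (one_le_log_exp_one_add hs) hα)

lemma log_exp_one_add_div_le_mul {t c : ℝ} (ht : 0 ≤ t) (hc : 0 < c) :
    log (exp 1 + t / c) ≤ (1 + log (1 + c⁻¹)) * log (exp 1 + t) := by
  have hL := one_le_log_exp_one_add ht
  have hK : 0 ≤ log (1 + c⁻¹) := log_nonneg (by simp [hc.le])
  calc log (exp 1 + t / c) ≤ log ((1 + c⁻¹) * (exp 1 + t)) := by
        refine log_le_log (by positivity) ?_
        have : 0 ≤ c⁻¹ * exp 1 + t := by positivity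
        rw [div_eq_inv_mul]; nlinarith
    _ = log (1 + c⁻¹) + log (exp 1 + t) := log_mul (by positivity) (by positivity)
    _ ≤ (1 + log (1 + c⁻¹)) * log (exp 1 + t) := by nlinarith

lemma log_exp_one_add_div_le_log_div_add {t c σ : ℝ} (ht : 0 ≤ t) (hc : 0 < c) (hcσ : c ≤ σ) :
    log (exp 1 + t / c) ≤ log (σ / c) + log (exp 1 + t / σ) := by
  have hσ : 0 < σ := hc.trans_le hcσ
  rw [← log_mul (by positivity) (by positivity)]
  refine log_le_log (by positivity) ?_
  have h : exp 1 ≤ σ / c * exp 1 := le_mul_of_one_le_left (exp_pos 1).le ((one_le_div hc).2 hcσ)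
  calc exp 1 + t / c ≤ σ / c * exp 1 + t / c := by linarith
    _ = σ / c * (exp 1 + t / σ) := by field_simp

end Real

section LogModular

variable {X : Type*} [MeasurableSpace X] {ν : Measure X} {p α : ℝ} {f : X → ℝ}

/-- The Luxemburg condition at `σ` reads `logModular ν p α f σ ≤ σ ^ p`, and the modular
`[f]` is `logModular ν p α f ‖f‖_p ^ (1 / p)`. -/
noncomputable def logModular (ν : Measure X) (p α : ℝ) (f : X → ℝ) (c : ℝ) : ℝ :=
  ∫ x, |f x| ^ p * log (exp 1 + |f x| / c) ^ α ∂ν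

lemma integral_div_rpow_mul_log_le_one_iff {σ : ℝ} (hσ : 0 < σ) :
    ∫ x, (|f x| ^ p / σ ^ p) * log (exp 1 + |f x| / σ) ^ α ∂ν ≤ 1 ↔
      logModular ν p α f σ ≤ σ ^ p := by
  simp_rw [div_mul_eq_mul_div]
  rw [integral_div, div_le_one (rpow_pos_of_pos hσ p), logModular]

variable (hf : Measurable f) (hα : 0 ≤ α)
  (hmem : Integrable (fun x => |f x| ^ p * log (exp 1 + |f x|) ^ α) ν)
include hf hα hmem

lemma integrable_abs_rpow_of_integrable_mul_log :
    Integrable (fun x => |f x| ^ p) ν :=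
  hmem.mono' (hf.abs.pow_const p).aestronglyMeasurable <| ae_of_all _ fun x => by
    rw [norm_of_nonneg (by positivity)]
    exact le_mul_log_exp_one_add_rpow (by positivity) (abs_nonneg _) hα

lemma integrable_mul_log_div {c : ℝ} (hc : 0 < c) :
    Integrable (fun x => |f x| ^ p * log (exp 1 + |f x| / c) ^ α) ν := by
  refine (hmem.const_mul ((1 + log (1 + c⁻¹)) ^ α)).mono' (by fun_prop) <| ae_of_all _ fun x => ?_
  have hlog := one_le_log_exp_one_add (div_nonneg (abs_nonneg (f x)) hc.le)
  have hlog' := one_le_log_exp_one_add (abs_nonneg (f x))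
  have hK : 0 ≤ log (1 + c⁻¹) := log_nonneg (by simp [hc.le])
  rw [norm_of_nonneg (mul_nonneg (by positivity) (rpow_nonneg (by linarith) α)),
    mul_left_comm, ← mul_rpow (by positivity) (by linarith)]
  gcongr
  exact log_exp_one_add_div_le_mul (abs_nonneg _) hc

lemma integral_abs_rpow_le_logModular {c : ℝ} (hc : 0 < c) :
    ∫ x, |f x| ^ p ∂ν ≤ logModular ν p α f c :=
  integral_mono (integrable_abs_rpow_of_integrable_mul_log hf hα hmem)
    (integrable_mul_log_div hf hα hmem hc) fun x =>
      le_mul_log_exp_one_add_rpow (by positivity) (by positivity) hα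

lemma logModular_anti {c c' : ℝ} (hc : 0 < c) (hcc' : c ≤ c') :
    logModular ν p α f c' ≤ logModular ν p α f c := by
  have hc' : 0 < c' := hc.trans_le hcc'
  refine integral_mono (integrable_mul_log_div hf hα hmem hc')
    (integrable_mul_log_div hf hα hmem hc) fun x => ?_
  have hlog := one_le_log_exp_one_add (div_nonneg (abs_nonneg (f x)) hc'.le)
  dsimp only
  gcongr

lemma logModular_le_two_rpow_mul {c σ : ℝ} (hc : 0 < c) (hcσ : c ≤ σ) :
    logModular ν p α f c ≤
      2 ^ α * (log (σ / c) ^ α * ∫ x, |f x| ^ p ∂ν + logModular ν p α f σ) := by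
  have hσ : 0 < σ := hc.trans_le hcσ
  have hint₁ := (integrable_abs_rpow_of_integrable_mul_log hf hα hmem).const_mul (log (σ / c) ^ α)
  have hint₂ := integrable_mul_log_div hf hα hmem hσ
  rw [logModular, logModular, ← integral_const_mul, ← integral_add hint₁ hint₂,
    ← integral_const_mul]
  refine integral_mono (integrable_mul_log_div hf hα hmem hc)
    ((hint₁.add hint₂).const_mul _) fun x => ?_
  have ha : 0 ≤ log (σ / c) := log_nonneg ((one_le_div hc).2 hcσ)
  calc |f x| ^ p * log (exp 1 + |f x| / c) ^ α
      ≤ |f x| ^ p * (log (σ / c) + log (exp 1 + |f x| / σ)) ^ α := by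
        have := one_le_log_exp_one_add (div_nonneg (abs_nonneg (f x)) hc.le)
        gcongr
        exact log_exp_one_add_div_le_log_div_add (abs_nonneg _) hc hcσ
    _ ≤ |f x| ^ p * (2 ^ α * (log (σ / c) ^ α + log (exp 1 + |f x| / σ) ^ α)) := by
        gcongr
        exact add_rpow_le_two_rpow_mul_rpow_add_rpow ha
          (zero_le_one.trans (one_le_log_exp_one_add (by positivity))) hα
    _ = _ := by ring

lemma le_of_logModular_le_rpow (hp : 0 < p) {M c m : ℝ} (hM : 0 ≤ M)
    (hMp : M ^ p = ∫ x, |f x| ^ p ∂ν) (hc : 0 < c) (hm : 0 ≤ m)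
    (hcm : logModular ν p α f c ≤ m ^ p) : M ≤ m :=
  (rpow_le_rpow_iff hM hm hp).1 <| hMp ▸ (integral_abs_rpow_le_logModular hf hα hmem hc).trans hcm

lemma logModular_le_rpow_of_rpow_eq (hp : 0 < p) {M m : ℝ} (hM : 0 < M)
    (hMp : M ^ p = ∫ x, |f x| ^ p ∂ν) (hm : 0 ≤ m) (hmp : m ^ p = logModular ν p α f M) :
    logModular ν p α f m ≤ m ^ p :=
  hmp ▸ logModular_anti hf hα hmem hM
    (le_of_logModular_le_rpow hf hα hmem hp hM.le hMp hM hm hmp.ge)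

omit hα in
lemma le_mul_of_logModular_le_rpow (hp : 1 ≤ p) (hα : 0 < α) {M m σ : ℝ} (hM : 0 < M)
    (hMp : M ^ p = ∫ x, |f x| ^ p ∂ν) (hm : 0 ≤ m) (hmp : m ^ p = logModular ν p α f M)
    (hσ : 0 < σ) (hσp : logModular ν p α f σ ≤ σ ^ p) :
    m ≤ (2 ^ α + (2 * α / (exp 1 * p)) ^ α) * σ := by
  have hp₀ : 0 < p := by linarith
  have hMσ : M ≤ σ := le_of_logModular_le_rpow hf hα.le hmem hp₀ hM.le hMp hσ hσ.le hσp
  have hlog : log (σ / M) ^ α * M ^ p ≤ (α / (exp 1 * p)) ^ α * σ ^ p := calc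
    log (σ / M) ^ α * M ^ p ≤ (α / (exp 1 * p)) ^ α * (σ / M) ^ p * M ^ p := by
      gcongr
      exact log_rpow_le_mul_rpow ((one_le_div hM).2 hMσ) hp₀ hα
    _ = (α / (exp 1 * p)) ^ α * σ ^ p := by
      rw [div_rpow hσ.le hM.le, mul_assoc, div_mul_cancel₀ _ (rpow_pos_of_pos hM p).ne']
  have hC : 1 ≤ 2 ^ α + (2 * α / (exp 1 * p)) ^ α := by
    have := one_le_rpow one_le_two hα.le
    have : 0 ≤ (2 * α / (exp 1 * p)) ^ α := by positivity
    linarith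
  have key : m ^ p ≤ ((2 ^ α + (2 * α / (exp 1 * p)) ^ α) * σ) ^ p := calc
    m ^ p ≤ 2 ^ α * (log (σ / M) ^ α * M ^ p + logModular ν p α f σ) := by
      rw [hmp, hMp]; exact logModular_le_two_rpow_mul hf hα.le hmem hM hMσ
    _ ≤ 2 ^ α * ((α / (exp 1 * p)) ^ α * σ ^ p + σ ^ p) := by gcongr
    _ = (2 ^ α + (2 * α / (exp 1 * p)) ^ α) * σ ^ p := by
      rw [mul_div_assoc, mul_rpow zero_le_two (by positivity)]; ring
    _ ≤ (2 ^ α + (2 * α / (exp 1 * p)) ^ α) ^ p * σ ^ p := by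
      gcongr; exact self_le_rpow_of_one_le hC hp
    _ = _ := (mul_rpow (by linarith) hσ.le).symm
  exact (rpow_le_rpow_iff hm (by positivity) hp₀).1 key

end LogModular

theorem luxNorm_le_modular_le_general (Ω : Set (EuclideanSpace ℝ (Fin n)))
    (hΩpos : 0 < volume Ω)
    (p α : ℝ) (hp : 1 ≤ p) (hα : 0 < α)
    (f : EuclideanSpace ℝ (Fin n) → ℝ) (hf : Measurable f)
    (hmem : Integrable (fun x => |f x| ^ p * (Real.log (Real.exp 1 + |f x|)) ^ α)
      (volume.restrict Ω))
    (hpos : 0 < meanLpNorm Ω p f) :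
    luxNorm Ω p α f ≤ modularNorm Ω p α f ∧
      modularNorm Ω p α f ≤
        (2 ^ α + (2 * α / (Real.exp 1 * p)) ^ α) * luxNorm Ω p α f := by
  have hp₀ : 0 < p := by linarith
  -- `⨍ x in Ω, g x` is by definition `∫ x, g x ∂ν`
  set ν := (volume.restrict Ω Set.univ)⁻¹ • volume.restrict Ω
  have hmemν : Integrable (fun x => |f x| ^ p * log (exp 1 + |f x|) ^ α) ν :=
    hmem.smul_measure (ENNReal.inv_ne_top.2 (by simpa using hΩpos.ne'))
  set M := meanLpNorm Ω p f
  set m := modularNorm Ω p α f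
  set S := {σ : ℝ | 0 < σ ∧ logModular ν p α f σ ≤ σ ^ p}
  have hMp : M ^ p = ∫ x, |f x| ^ p ∂ν := by
    rw [show M = (∫ x, |f x| ^ p ∂ν) ^ (1 / p) from rfl, one_div,
      rpow_inv_rpow (integral_nonneg fun x => by positivity) hp₀.ne']
  have hN : 0 ≤ logModular ν p α f M := (rpow_nonneg hpos.le p).trans
    (hMp ▸ integral_abs_rpow_le_logModular hf hα.le hmemν hpos)
  have hm₀ : 0 ≤ m := rpow_nonneg hN _
  have hmp : m ^ p = logModular ν p α f M := by
    rw [show m = logModular ν p α f M ^ (1 / p) from rfl, one_div, rpow_inv_rpow hN hp₀.ne']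
  have hlux : luxNorm Ω p α f = sInf S :=
    congr_arg sInf <| Set.ext fun σ => and_congr_right integral_div_rpow_mul_log_le_one_iff
  have hmS : m ∈ S := ⟨hpos.trans_le <|
      le_of_logModular_le_rpow hf hα.le hmemν hp₀ hpos.le hMp hpos hm₀ hmp.ge,
    logModular_le_rpow_of_rpow_eq hf hα.le hmemν hp₀ hpos hMp hm₀ hmp⟩
  have hC : 0 < 2 ^ α + (2 * α / (exp 1 * p)) ^ α := by positivity
  refine ⟨hlux ▸ csInf_le ⟨0, fun σ hσ => hσ.1.le⟩ hmS, ?_⟩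
  rw [hlux, ← div_le_iff₀' hC]
  exact le_csInf ⟨m, hmS⟩ fun σ hσ => (div_le_iff₀' hC).2 <|
    le_mul_of_logModular_le_rpow hf hmemν hp hα hpos hMp hm₀ hmp hσ.1 hσ.2

theorem luxNorm_le_modular_le (Ω : Set (EuclideanSpace ℝ (Fin n)))
    (hΩm : MeasurableSet Ω) (hΩfin : volume Ω < ⊤) (hΩpos : 0 < volume Ω)
    (p α : ℝ) (hp : 1 ≤ p) (hα : 0 < α)
    (f : EuclideanSpace ℝ (Fin n) → ℝ) (hf : Measurable f)
    (hmem : Integrable (fun x => |f x| ^ p * (Real.log (Real.exp 1 + |f x|)) ^ α)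
      (volume.restrict Ω))
    (hpos : 0 < meanLpNorm Ω p f) :
    luxNorm Ω p α f ≤ modularNorm Ω p α f ∧
      modularNorm Ω p α f ≤
        (2 ^ α + (2 * α / (Real.exp 1 * p)) ^ α) * luxNorm Ω p α f :=
  luxNorm_le_modular_le_general Ω hΩpos p α hp hα f hf hmem hpos
end

section
/- Let 1 < p < 2 and n ≥ 1. For every ε > 0 there exists C_ε = C(p, ε) > 0 such that for all ξ₁, ξ₂ ∈ ℝⁿ, not both zero: |ξ₁ − ξ₂|^p · log(e + |ξ₁ − ξ₂|) ≤ ε·(|ξ₁| + |ξ₂|)^p · log(e + |ξ₁| + |ξ₂|) + C_ε · |ξ₁ − ξ₂|² · (|ξ₁|² + |ξ₂|²)^{(p−2)/2} · log(e + |ξ₁| + |ξ₂|). -/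
open Real

theorem young_inequality_with_eps {r q : ℝ} (hrq : r.HolderConjugate q) {ε : ℝ} (hε : 0 < ε) :
    ∃ C, 0 < C ∧ ∀ a b : ℝ, 0 ≤ a → 0 ≤ b → a * b ≤ ε * a ^ r + C * b ^ q := by
  -- rescale `a * b = (t * a) * (t⁻¹ * b)` with `t ^ r = ε`
  set t := ε ^ r⁻¹
  have ht : 0 < t := rpow_pos_of_pos hε _
  have htr : t ^ r = ε := by rw [← rpow_mul hε.le, inv_mul_cancel₀ hrq.ne_zero, rpow_one]
  refine ⟨t ^ (-q), rpow_pos_of_pos ht _, fun a b ha hb => ?_⟩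
  have hta : 0 ≤ t * a := by positivity
  have htb : 0 ≤ t⁻¹ * b := by positivity
  calc a * b = (t * a) * (t⁻¹ * b) := by field_simp
    _ ≤ (t * a) ^ r / r + (t⁻¹ * b) ^ q / q := young_inequality_of_nonneg hta htb hrq
    _ ≤ (t * a) ^ r + (t⁻¹ * b) ^ q := by
      gcongr
      · exact div_le_self (by positivity) hrq.lt.le
      · exact div_le_self (by positivity) hrq.symm.lt.le
    _ = ε * a ^ r + t ^ (-q) * b ^ q := by
      rw [mul_rpow ht.le ha, mul_rpow (inv_nonneg.2 ht.le) hb, htr, inv_rpow ht.le, rpow_neg ht.le]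

theorem sq_add_sq_rpow_half_le_add_rpow {x y s : ℝ} (hx : 0 ≤ x) (hy : 0 ≤ y) (hs : 0 ≤ s) :
    (x ^ 2 + y ^ 2) ^ (s / 2) ≤ (x + y) ^ s := by
  calc (x ^ 2 + y ^ 2) ^ (s / 2) ≤ ((x + y) ^ 2) ^ (s / 2) :=
        rpow_le_rpow (by positivity) (by nlinarith) (by positivity)
    _ = (x + y) ^ s := by
      rw [← rpow_two, ← rpow_mul (by positivity)]
      ring_nf

/-- The splitting `a ^ p = Q ^ (p (2 - p) / 4) * (Q ^ ((p - 2) / 2) * a ^ 2) ^ (p / 2)` and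
Young's inequality with exponents `2 / (2 - p)` and `2 / p`. -/
theorem exists_rpow_le_eps_mul_rpow_add_sq_mul_rpow {p : ℝ} (hp0 : 0 < p) (hp2 : p < 2)
    {ε : ℝ} (hε : 0 < ε) :
    ∃ C, 0 < C ∧ ∀ a Q : ℝ, 0 ≤ a → 0 < Q →
      a ^ p ≤ ε * Q ^ (p / 2) + C * a ^ 2 * Q ^ ((p - 2) / 2) := by
  have h2p : 2 - p ≠ 0 := by linarith
  have hrq : (2 / (2 - p)).HolderConjugate (2 / p) := by
    rw [holderConjugate_iff]
    refine ⟨by rw [lt_div_iff₀ (by linarith)]; linarith, ?_⟩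
    field_simp
    ring
  obtain ⟨C, hC, hyoung⟩ := young_inequality_with_eps hrq hε
  refine ⟨C, hC, fun a Q ha hQ => ?_⟩
  have hsplit : a ^ p = Q ^ (p * (2 - p) / 4) * (Q ^ ((p - 2) * p / 4) * a ^ p) := by
    rw [← mul_assoc, ← rpow_add hQ, show p * (2 - p) / 4 + (p - 2) * p / 4 = 0 by ring,
      rpow_zero, one_mul]
  have hX : (Q ^ (p * (2 - p) / 4)) ^ (2 / (2 - p)) = Q ^ (p / 2) := by
    rw [← rpow_mul hQ.le]
    congr 1
    field_simp
    ring
  have hY : (Q ^ ((p - 2) * p / 4) * a ^ p) ^ (2 / p) = a ^ 2 * Q ^ ((p - 2) / 2) := by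
    rw [mul_rpow (by positivity) (by positivity), ← rpow_mul hQ.le, ← rpow_mul ha,
      show p * (2 / p) = 2 by field_simp, rpow_two, mul_comm]
    congr 2
    field_simp
    ring
  calc a ^ p = Q ^ (p * (2 - p) / 4) * (Q ^ ((p - 2) * p / 4) * a ^ p) := hsplit
    _ ≤ ε * Q ^ (p / 2) + C * (a ^ 2 * Q ^ ((p - 2) / 2)) := by
      rw [← hX, ← hY]
      exact hyoung _ _ (by positivity) (by positivity)
    _ = ε * Q ^ (p / 2) + C * a ^ 2 * Q ^ ((p - 2) / 2) := by ring

theorem log_growth_comparison_p_lt_two_general (n : ℕ) (p : ℝ)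
    (hp1 : 1 < p) (hp2 : p < 2) :
    ∀ ε : ℝ, 0 < ε → ∃ C : ℝ, 0 < C ∧
      ∀ ξ₁ ξ₂ : EuclideanSpace ℝ (Fin n), ¬(ξ₁ = 0 ∧ ξ₂ = 0) →
        ‖ξ₁ - ξ₂‖ ^ p * Real.log (Real.exp 1 + ‖ξ₁ - ξ₂‖) ≤
          ε * (‖ξ₁‖ + ‖ξ₂‖) ^ p * Real.log (Real.exp 1 + ‖ξ₁‖ + ‖ξ₂‖) +
          C * ‖ξ₁ - ξ₂‖ ^ (2 : ℝ) * (‖ξ₁‖ ^ (2 : ℝ) + ‖ξ₂‖ ^ (2 : ℝ)) ^ ((p - 2) / 2) *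
            Real.log (Real.exp 1 + ‖ξ₁‖ + ‖ξ₂‖) := by
  intro ε hε
  obtain ⟨C, hC, hkey⟩ := exists_rpow_le_eps_mul_rpow_add_sq_mul_rpow (by linarith) hp2 hε
  refine ⟨C, hC, fun ξ₁ ξ₂ hne => ?_⟩
  simp only [rpow_two]
  have hQ : 0 < ‖ξ₁‖ ^ 2 + ‖ξ₂‖ ^ 2 := by
    rcases not_and_or.mp hne with h | h
    · have := norm_pos_iff.2 h; positivity
    · have := norm_pos_iff.2 h; positivity
  have hL : 0 ≤ log (exp 1 + ‖ξ₁‖ + ‖ξ₂‖) :=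
    log_nonneg (by linarith [one_le_exp zero_le_one, norm_nonneg ξ₁, norm_nonneg ξ₂])
  have hLa : log (exp 1 + ‖ξ₁ - ξ₂‖) ≤ log (exp 1 + ‖ξ₁‖ + ‖ξ₂‖) :=
    log_le_log (by positivity) (by linarith [norm_sub_le ξ₁ ξ₂])
  have hpow : ‖ξ₁ - ξ₂‖ ^ p ≤ ε * (‖ξ₁‖ + ‖ξ₂‖) ^ p +
      C * ‖ξ₁ - ξ₂‖ ^ 2 * (‖ξ₁‖ ^ 2 + ‖ξ₂‖ ^ 2) ^ ((p - 2) / 2) :=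
    (hkey _ _ (norm_nonneg _) hQ).trans <| by
      gcongr
      exact sq_add_sq_rpow_half_le_add_rpow (norm_nonneg _) (norm_nonneg _) (by linarith)
  calc ‖ξ₁ - ξ₂‖ ^ p * log (exp 1 + ‖ξ₁ - ξ₂‖)
      ≤ ‖ξ₁ - ξ₂‖ ^ p * log (exp 1 + ‖ξ₁‖ + ‖ξ₂‖) := by gcongr
    _ ≤ (ε * (‖ξ₁‖ + ‖ξ₂‖) ^ p + C * ‖ξ₁ - ξ₂‖ ^ 2 * (‖ξ₁‖ ^ 2 + ‖ξ₂‖ ^ 2) ^ ((p - 2) / 2)) *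
        log (exp 1 + ‖ξ₁‖ + ‖ξ₂‖) := mul_le_mul_of_nonneg_right hpow hL
    _ = _ := by ring

theorem log_growth_comparison_p_lt_two (n : ℕ) (hn : 1 ≤ n) (p : ℝ)
    (hp1 : 1 < p) (hp2 : p < 2) :
    ∀ ε : ℝ, 0 < ε → ∃ C : ℝ, 0 < C ∧
      ∀ ξ₁ ξ₂ : EuclideanSpace ℝ (Fin n), ¬(ξ₁ = 0 ∧ ξ₂ = 0) →
        ‖ξ₁ - ξ₂‖ ^ p * Real.log (Real.exp 1 + ‖ξ₁ - ξ₂‖) ≤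
          ε * (‖ξ₁‖ + ‖ξ₂‖) ^ p * Real.log (Real.exp 1 + ‖ξ₁‖ + ‖ξ₂‖) +
          C * ‖ξ₁ - ξ₂‖ ^ (2 : ℝ) * (‖ξ₁‖ ^ (2 : ℝ) + ‖ξ₂‖ ^ (2 : ℝ)) ^ ((p - 2) / 2) *
            Real.log (Real.exp 1 + ‖ξ₁‖ + ‖ξ₂‖) :=
  log_growth_comparison_p_lt_two_general n p hp1 hp2
end
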